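/- arXiv:1405.3573 — 2 statements merged into one kernel-verified Lean document; each statement's English description precedes it below -/
import Mathlib

section
/- Let K ⊂ ℝ be a compact set, let μ be a nonnegative Borel measure on ℝ with support contained in K, and let ν be any nonnegative Borel measure on ℝ with finite moments of all orders. If ∫ x^n dμ = ∫ x^n dν for all n ≥ 0, then μ = ν. -/
open MeasureTheory Set Filter Topology Polynomial

/-!
The moment bounds `∫ x ^ (2 * n) ∂ν = ∫ x ^ (2 * n) ∂μ ≤ μ(ℝ) R ^ (2 * n)`, where `K ⊆ [-R, R]`,
force `ν` to be concentrated on `[-R - 1, R + 1]` by Markov's inequality. Both measures then live on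
a compact interval on which, by Weierstrass, polynomials are uniformly dense in the continuous
functions; so equal moments give equal integrals of every bounded continuous function.
-/

theorem Continuous.integrable_of_ae_mem_compact {X E : Type*} [TopologicalSpace X] [T2Space X]
    [MeasurableSpace X] [OpensMeasurableSpace X] [NormedAddCommGroup E] {μ : Measure X}
    [IsFiniteMeasureOnCompacts μ] {K : Set X} (hK : IsCompact K) (hμ : ∀ᵐ x ∂μ, x ∈ K)
    {f : X → E} (hf : Continuous f) : Integrable f μ := by
  rw [← Measure.restrict_eq_self_of_ae_mem hμ]
  exact hf.continuousOn.integrableOn_compact hK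

theorem abs_integral_sub_integral_le {X : Type*} [MeasurableSpace X] {μ : Measure X}
    [IsFiniteMeasure μ] {f g : X → ℝ} (hf : Integrable f μ) (hg : Integrable g μ) {ε : ℝ}
    (h : ∀ᵐ x ∂μ, |f x - g x| ≤ ε) : |∫ x, f x ∂μ - ∫ x, g x ∂μ| ≤ ε * μ.real univ := by
  rw [← integral_sub hf hg]
  exact norm_integral_le_of_norm_le_const (f := fun x => f x - g x) h

namespace MeasureTheory

variable {μ ν : Measure ℝ}

theorem integral_pow_le_of_ae_abs_le [IsFiniteMeasure μ] {R : ℝ} (h : ∀ᵐ x ∂μ, |x| ≤ R)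
    (n : ℕ) : ∫ x, x ^ n ∂μ ≤ μ.real univ * R ^ n :=
  calc ∫ x, x ^ n ∂μ ≤ ‖∫ x, x ^ n ∂μ‖ := le_abs_self _
    _ ≤ R ^ n * μ.real univ := norm_integral_le_of_norm_le_const <| h.mono fun x hx => by
        rw [norm_pow, Real.norm_eq_abs]
        exact pow_le_pow_left₀ (abs_nonneg x) hx n
    _ = μ.real univ * R ^ n := mul_comm _ _

theorem measure_le_abs_eq_zero_of_integral_pow_le [IsFiniteMeasure ν] {C R t : ℝ} (hR : 0 ≤ R)
    (hRt : R < t) (hint : ∀ n : ℕ, Integrable (fun x : ℝ => x ^ (2 * n)) ν)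
    (hbound : ∀ n : ℕ, ∫ x, x ^ (2 * n) ∂ν ≤ C * R ^ (2 * n)) : ν {x | t ≤ |x|} = 0 := by
  have ht : 0 < t := hR.trans_lt hRt
  have markov : ∀ n : ℕ, ν.real {x | t ≤ |x|} ≤ C * ((R / t) ^ 2) ^ n := by
    intro n
    have hsub : {x : ℝ | t ≤ |x|} ⊆ {x | t ^ (2 * n) ≤ x ^ (2 * n)} := fun x hx =>
      (pow_le_pow_left₀ ht.le hx _).trans_eq ((even_two_mul n).pow_abs x)
    rw [← pow_mul, div_pow, ← mul_div_assoc, le_div_iff₀ (by positivity), mul_comm]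
    calc t ^ (2 * n) * ν.real {x | t ≤ |x|}
        ≤ t ^ (2 * n) * ν.real {x | t ^ (2 * n) ≤ x ^ (2 * n)} :=
          mul_le_mul_of_nonneg_left (measureReal_mono hsub) (by positivity)
      _ ≤ ∫ x, x ^ (2 * n) ∂ν := mul_meas_ge_le_integral_of_nonneg
          (ae_of_all _ fun x => (even_two_mul n).pow_nonneg x) (hint n) _
      _ ≤ C * R ^ (2 * n) := hbound n
  have hlim : Tendsto (fun n : ℕ => C * ((R / t) ^ 2) ^ n) atTop (𝓝 0) := by
    have hq : (R / t) ^ 2 < 1 := pow_lt_one₀ (by positivity) ((div_lt_one ht).2 hRt) two_ne_zero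
    simpa using (tendsto_pow_atTop_nhds_zero_of_lt_one (by positivity) hq).const_mul C
  exact (measureReal_eq_zero_iff (measure_ne_top ν _)).1
    (le_antisymm (ge_of_tendsto' hlim markov) measureReal_nonneg)

theorem integral_eval_eq_of_integral_pow_eq (hμ : ∀ n : ℕ, Integrable (fun x : ℝ => x ^ n) μ)
    (hν : ∀ n : ℕ, Integrable (fun x : ℝ => x ^ n) ν)
    (h : ∀ n : ℕ, ∫ x, x ^ n ∂μ = ∫ x, x ^ n ∂ν) (p : ℝ[X]) :
    ∫ x, p.eval x ∂μ = ∫ x, p.eval x ∂ν := by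
  simp_rw [eval_eq_sum_range]
  rw [integral_finsetSum _ fun i _ => (hμ i).const_mul _,
    integral_finsetSum _ fun i _ => (hν i).const_mul _]
  simp_rw [integral_const_mul, h]

section Icc

variable {a b : ℝ} [IsFiniteMeasure μ] [IsFiniteMeasure ν]

theorem integral_eq_of_integral_eval_eq (hμ : ∀ᵐ x ∂μ, x ∈ Icc a b) (hν : ∀ᵐ x ∂ν, x ∈ Icc a b)
    (h : ∀ p : ℝ[X], ∫ x, p.eval x ∂μ = ∫ x, p.eval x ∂ν) {f : ℝ → ℝ} (hf : Continuous f) :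
    ∫ x, f x ∂μ = ∫ x, f x ∂ν := by
  set C := μ.real univ + ν.real univ
  have hbound : ∀ ε > 0, |∫ x, f x ∂μ - ∫ x, f x ∂ν| ≤ ε * C := by
    intro ε hε
    obtain ⟨p, hp⟩ := exists_polynomial_near_of_continuousOn a b f hf.continuousOn ε hε
    have near : ∀ (ρ : Measure ℝ) [IsFiniteMeasure ρ], (∀ᵐ x ∂ρ, x ∈ Icc a b) →
        |∫ x, f x ∂ρ - ∫ x, p.eval x ∂ρ| ≤ ε * ρ.real univ := fun ρ _ hρ =>
      abs_integral_sub_integral_le (hf.integrable_of_ae_mem_compact isCompact_Icc hρ)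
        (p.continuous.integrable_of_ae_mem_compact isCompact_Icc hρ)
        (hρ.mono fun x hx => by rw [abs_sub_comm]; exact (hp x hx).le)
    calc |∫ x, f x ∂μ - ∫ x, f x ∂ν|
        = |(∫ x, f x ∂μ - ∫ x, p.eval x ∂μ) - (∫ x, f x ∂ν - ∫ x, p.eval x ∂ν)| := by
          rw [h p, sub_sub_sub_cancel_right]
      _ ≤ |∫ x, f x ∂μ - ∫ x, p.eval x ∂μ| + |∫ x, f x ∂ν - ∫ x, p.eval x ∂ν| := abs_sub _ _
      _ ≤ ε * μ.real univ + ε * ν.real univ := add_le_add (near μ hμ) (near ν hν)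
      _ = ε * C := (mul_add _ _ _).symm
  have hlim : Tendsto (fun ε : ℝ => ε * C) (𝓝[>] 0) (𝓝 0) := by
    simpa using tendsto_nhdsWithin_of_tendsto_nhds (tendsto_id.mul_const C (x := 𝓝 (0 : ℝ)))
  have hzero := ge_of_tendsto hlim (eventually_nhdsWithin_of_forall hbound)
  exact sub_eq_zero.1 (abs_nonpos_iff.1 hzero)

theorem ext_of_integral_pow_eq (hμ : ∀ᵐ x ∂μ, x ∈ Icc a b) (hν : ∀ᵐ x ∂ν, x ∈ Icc a b)
    (h : ∀ n : ℕ, ∫ x, x ^ n ∂μ = ∫ x, x ^ n ∂ν) : μ = ν := by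
  have hpow : ∀ (ρ : Measure ℝ) [IsFiniteMeasure ρ], (∀ᵐ x ∂ρ, x ∈ Icc a b) →
      ∀ n : ℕ, Integrable (fun x : ℝ => x ^ n) ρ := fun ρ _ hρ n =>
    (continuous_pow n).integrable_of_ae_mem_compact isCompact_Icc hρ
  have hpoly := integral_eval_eq_of_integral_pow_eq (hpow μ hμ) (hpow ν hν) h
  exact ext_of_forall_integral_eq_of_IsFiniteMeasure fun f =>
    integral_eq_of_integral_eval_eq hμ hν hpoly f.continuous

end Icc

end MeasureTheory

/-- A finite nonnegative Borel measure supported in a compact set `K ⊆ ℝ` is determined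
by its moments: any nonnegative Borel measure on `ℝ` with finite moments of all orders
and the same moment sequence coincides with it. -/
theorem compactly_supported_measure_determinate (K : Set ℝ) (hK : IsCompact K)
    (μ : Measure ℝ) [IsFiniteMeasure μ] (hμsupp : μ Kᶜ = 0)
    (ν : Measure ℝ) (hν : ∀ n : ℕ, Integrable (fun x : ℝ => x ^ n) ν)
    (heq : ∀ n : ℕ, ∫ x, x ^ n ∂μ = ∫ x, x ^ n ∂ν) :
    μ = ν := by
  obtain ⟨R, hR, hKR⟩ := hK.isBounded.exists_pos_norm_le
  have hμK : ∀ᵐ x ∂μ, x ∈ K := mem_ae_iff.2 hμsupp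
  have hμR : ∀ᵐ x ∂μ, |x| ≤ R := hμK.mono hKR
  have : IsFiniteMeasure ν :=
    (integrable_const_iff_isFiniteMeasure one_ne_zero).1 (by simpa using hν 0)
  have hνR : ν {x | R + 1 ≤ |x|} = 0 :=
    measure_le_abs_eq_zero_of_integral_pow_le hR.le (lt_add_one R) (fun n => hν (2 * n))
      fun n => heq (2 * n) ▸ integral_pow_le_of_ae_abs_le hμR (2 * n)
  refine ext_of_integral_pow_eq (a := -(R + 1)) (b := R + 1) ?_ ?_ heq
  · exact hμR.mono fun x hx => abs_le.1 (hx.trans (by linarith))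
  · filter_upwards [measure_eq_zero_iff_ae_notMem.1 hνR] with x hx
    exact abs_le.1 (not_le.1 hx).le
end

section
/- Let (M_n)_{n≥0} be a log-convex sequence of positive real numbers. If ∑_{n=1}^∞ M_{2n}^{-1/(2n)} = ∞, then for every h ∈ ℕ_0 also ∑_{n=1}^∞ M_{2n+h}^{-1/(2n)} = ∞. -/
open Real

private lemma pow_step (N : ℕ → ℝ) (hN : ∀ n, 0 < N n)
    (hlc : ∀ n : ℕ, N (n + 1) ^ 2 ≤ N n * N (n + 2)) :
    ∀ m : ℕ, N m ^ (m + 1) ≤ N 0 * N (m + 1) ^ m := by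
  intro m
  induction m with
  | zero => simp
  | succ m ih =>
      have h1 := hlc m
      have A : N (m+1) ^ (2*(m+1)) ≤ (N m * N (m+2)) ^ (m+1) := by
        rw [pow_mul]
        exact pow_le_pow_left₀ (sq_nonneg _) h1 (m+1)
      have B : (N m * N (m+2)) ^ (m+1) = N m ^ (m+1) * N (m+2) ^ (m+1) := mul_pow _ _ _
      have Cc : N m ^ (m+1) * N (m+2) ^ (m+1) ≤ (N 0 * N (m+1) ^ m) * N (m+2) ^ (m+1) :=
        mul_le_mul_of_nonneg_right ih (le_of_lt (pow_pos (hN _) _))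
      have key : N (m+1) ^ (m+1+1) * N (m+1) ^ m ≤ (N 0 * N (m+1+1) ^ (m+1)) * N (m+1) ^ m := by
        have e1 : N (m+1) ^ (m+1+1) * N (m+1) ^ m = N (m+1) ^ (2*(m+1)) := by
          rw [← pow_add]
          congr 1
          omega
        have e2 : (N 0 * N (m+1) ^ m) * N (m+2) ^ (m+1)
            = (N 0 * N (m+1+1) ^ (m+1)) * N (m+1) ^ m := by
          ring_nf
        rw [e1]
        calc N (m+1) ^ (2*(m+1)) ≤ N m ^ (m+1) * N (m+2) ^ (m+1) := by rw [← B]; exact A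
          _ ≤ (N 0 * N (m+1) ^ m) * N (m+2) ^ (m+1) := Cc
          _ = _ := e2
      exact le_of_mul_le_mul_right key (pow_pos (hN _) _)

private lemma est (A B Z q : ℝ) (hq : 3 ≤ q) (hmono : (q+1) * B ≤ Z + q * A) :
    Real.exp ((-A)/(q+1)) ≤
      Real.exp (1 + 2*|Z|) * Real.exp ((-B)/(q-1)) + Real.exp (1 + 2*|Z|) * Real.exp (-(q-1)) := by
  have hq0 : (0:ℝ) < q := by linarith
  have hq1 : (0:ℝ) < q + 1 := by linarith
  have hqm : (0:ℝ) < q - 1 := by linarith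
  set u := (B - Z)/q with hudef
  set v := (A - Z)/(q+1) with hvdef
  have hB : u * q = B - Z := div_mul_cancel₀ _ (ne_of_gt hq0)
  have hA : v * (q+1) = A - Z := div_mul_cancel₀ _ (ne_of_gt hq1)
  have huv : u ≤ v := by
    rw [hudef, hvdef, div_le_div_iff₀ hq0 hq1]
    nlinarith
  have e1 : (-A)/(q+1) = -v + (-Z)/(q+1) := by
    rw [show -A = -v*(q+1) + -Z by nlinarith [hA]]
    field_simp
  have b1 : (-Z)/(q+1) ≤ |Z| := by
    rw [div_le_iff₀ hq1]
    nlinarith [neg_le_abs Z, abs_nonneg Z]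
  by_cases hu : u ≤ q - 1
  · have h1 : Real.exp ((-A)/(q+1)) ≤ Real.exp (1 + 2*|Z|) * Real.exp ((-B)/(q-1)) := by
      rw [← Real.exp_add, Real.exp_le_exp]
      have e2 : (-B)/(q-1) = -u + (-(u + Z))/(q-1) := by
        rw [show -B = (-u + (-(u+Z))/(q-1))*(q-1) by field_simp; nlinarith [hB]]
        field_simp
      have b2 : (-(u + Z))/(q-1) ≥ -(1 + |Z|) := by
        rw [ge_iff_le, neg_le, ← neg_div, neg_neg, div_le_iff₀ hqm]
        nlinarith [le_abs_self Z, abs_nonneg Z]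
      rw [e1, e2]
      have : -v ≤ -u := by linarith
      linarith [abs_nonneg Z]
    linarith [h1, mul_pos (Real.exp_pos (1 + 2*|Z|)) (Real.exp_pos (-(q-1)))]
  · have h1 : Real.exp ((-A)/(q+1)) ≤ Real.exp (1 + 2*|Z|) * Real.exp (-(q-1)) := by
      rw [← Real.exp_add, Real.exp_le_exp, e1]
      push_neg at hu
      linarith [abs_nonneg Z]
    linarith [h1, mul_pos (Real.exp_pos (1 + 2*|Z|)) (Real.exp_pos ((-B)/(q-1)))]

private lemma core (N : ℕ → ℝ) (hN : ∀ n, 0 < N n)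
    (hlc : ∀ n : ℕ, N (n + 1) ^ 2 ≤ N n * N (n + 2))
    (hb : Summable (fun n : ℕ => N (2 * (n + 1) + 1) ^ (-(1 : ℝ) / (2 * ((n : ℝ) + 1))))) :
    Summable (fun n : ℕ => N (2 * (n + 1)) ^ (-(1 : ℝ) / (2 * ((n : ℝ) + 1)))) := by
  set L : ℕ → ℝ := fun m => Real.log (N m) with hL
  set C : ℝ := Real.exp (1 + 2 * |L 0|) with hC
  have hlog : ∀ m : ℕ, ((m:ℝ)+1) * L m ≤ L 0 + (m:ℝ) * L (m+1) := by
    intro m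
    have h1 : N m ^ (m+1) ≤ N 0 * N (m+1) ^ m := pow_step N hN hlc m
    have h2 := Real.log_le_log (pow_pos (hN m) (m+1)) h1
    rw [Real.log_pow, Real.log_mul (ne_of_gt (hN 0)) (pow_ne_zero _ (ne_of_gt (hN (m+1)))),
      Real.log_pow] at h2
    push_cast at h2 ⊢
    simp only [hL]
    linarith
  have key : ∀ n : ℕ, N (2*((n+1)+1)) ^ (-(1:ℝ)/(2*((((n+1):ℕ):ℝ)+1)))
      ≤ C * (N (2*(n+1)+1) ^ (-(1:ℝ)/(2*((n:ℝ)+1)))) + C * Real.exp (-2) ^ (n+1) := by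
    intro n
    have ef : N (2*((n+1)+1)) ^ (-(1:ℝ)/(2*((((n+1):ℕ):ℝ)+1)))
        = Real.exp ((-(L (2*n+4))) / ((2*(n:ℝ)+3)+1)) := by
      rw [show 2*((n+1)+1) = 2*n+4 from by omega, Real.rpow_def_of_pos (hN _)]
      congr 1
      push_cast
      ring
    have eg : N (2*(n+1)+1) ^ (-(1:ℝ)/(2*((n:ℝ)+1)))
        = Real.exp ((-(L (2*n+3))) / ((2*(n:ℝ)+3)-1)) := by
      rw [show 2*(n+1)+1 = 2*n+3 from by omega, Real.rpow_def_of_pos (hN _)]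
      congr 1
      ring
    have egeo : Real.exp (-((2*(n:ℝ)+3) - 1)) = Real.exp (-2) ^ (n+1) := by
      rw [← Real.exp_nat_mul]
      congr 1
      push_cast
      ring
    have hmono : ((2*(n:ℝ)+3)+1) * L (2*n+3) ≤ L 0 + (2*(n:ℝ)+3) * L (2*n+4) := by
      have := hlog (2*n+3)
      rw [show 2*n+3+1 = 2*n+4 from by omega] at this
      push_cast at this
      linarith
    rw [ef, eg, ← egeo, hC]
    exact est (L (2*n+4)) (L (2*n+3)) (L 0) (2*(n:ℝ)+3) (by have h0 : (0:ℝ) ≤ (n:ℝ) := Nat.cast_nonneg n; linarith) hmono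
  have hgeo : Summable (fun n : ℕ => Real.exp (-2) ^ (n+1)) := by
    have h01 : Real.exp (-2:ℝ) < 1 := by
      rw [Real.exp_lt_one_iff]
      norm_num
    simpa [pow_succ] using
      (summable_geometric_of_lt_one (Real.exp_pos _).le h01).mul_right (Real.exp (-2))
  have hsum : Summable (fun n : ℕ =>
      C * (N (2*(n+1)+1) ^ (-(1:ℝ)/(2*((n:ℝ)+1)))) + C * Real.exp (-2) ^ (n+1)) :=
    (hb.mul_left C).add (hgeo.mul_left C)
  have h1 : Summable (fun n : ℕ =>
      (fun n : ℕ => N (2 * (n + 1)) ^ (-(1 : ℝ) / (2 * ((n : ℝ) + 1)))) (n+1)) :=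
    Summable.of_nonneg_of_le (fun n => (Real.rpow_pos_of_pos (hN _) _).le) key hsum
  exact (summable_nat_add_iff 1).mp h1

/-- For a log-convex sequence `(M_n)` of positive reals, if `∑ M_{2n}^{-1/(2n)} = ∞`,
then `∑ M_{2n+h}^{-1/(2n)} = ∞` for every `h ∈ ℕ₀`. -/
theorem carleman_shift (M : ℕ → ℝ) (hM : ∀ n, 0 < M n)
    (hlc : ∀ n : ℕ, M (n + 1) ^ 2 ≤ M n * M (n + 2))
    (hdiv : ¬ Summable (fun n : ℕ =>
      M (2 * (n + 1)) ^ (-(1 : ℝ) / (2 * ((n : ℝ) + 1))))) :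
    ∀ h : ℕ, ¬ Summable (fun n : ℕ =>
      M (2 * (n + 1) + h) ^ (-(1 : ℝ) / (2 * ((n : ℝ) + 1)))) := by
  intro h
  induction h with
  | zero => simpa using hdiv
  | succ h ih =>
      intro hs
      apply ih
      have hb : Summable (fun n : ℕ =>
          (fun k => M (k + h)) (2 * (n + 1) + 1) ^ (-(1 : ℝ) / (2 * ((n : ℝ) + 1)))) := by
        simp only
        have e : ∀ n : ℕ, 2 * (n + 1) + 1 + h = 2 * (n + 1) + (h + 1) := fun n => by omega
        simpa only [e] using hs
      have := core (fun k => M (k + h)) (fun k => hM _)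
        (fun k => by
          have := hlc (k + h)
          simpa only [show k + h + 1 = k + 1 + h from by omega,
            show k + h + 2 = k + 2 + h from by omega] using this) hb
      simpa only using this
end
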